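/- In the privacy-constrained model, for any agent i, reporting a threshold τ̂ᵢ < τᵢ is weakly dominated by reporting τᵢ: for any fixed reports of other agents, the optimal variance of the program with the truthful report is at most the optimal variance with the underreport, and hence the agent's utility g(optimal variance) under truthful reporting is at least that under underreporting. -/
import Mathlib


noncomputable section

/-- Feasibility of `(w, η)` for the privacy-constrained program with reported
thresholds `τ`. -/
def FeasR {n : ℕ} (τ : Fin n → ℝ) (w : Fin n → ℝ) (η : ℝ) : Prop :=
  (∀ i, w i * η ≤ τ i) ∧ (∑ i, w i = 1) ∧ (∀ i, 0 ≤ w i) ∧ 0 < η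

/-- Optimal value (variance) of the privacy-constrained program with reported
thresholds `τ`. -/
def OPTval {n : ℕ} (σ2 : ℝ) (τ : Fin n → ℝ) : ℝ :=
  sInf {val | ∃ w η, FeasR τ w η ∧ val = σ2 * ∑ i, (w i) ^ 2 + 2 / η ^ 2}

/-- Underreporting one's privacy threshold is weakly dominated: for fixed
reports of the other agents, the optimal variance under the truthful report is
at most that under an underreport, hence the agent's utility g(optimal
variance) under truthful reporting is at least that under underreporting. -/
theorem underreporting_dominated {n : ℕ} (σ2 : ℝ) (hσ2 : 0 < σ2)
    (g : ℝ → ℝ) (hg0 : ∀ x, 0 ≤ g x) (hg : Antitone g)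
    (r : Fin n → ℝ) (i : Fin n) (τi τhat : ℝ) (hτhat : 0 < τhat) (hlt : τhat < τi)
    (hfeas : ∃ w η, FeasR (Function.update r i τhat) w η) :
    OPTval σ2 (Function.update r i τi) ≤ OPTval σ2 (Function.update r i τhat) ∧
      g (OPTval σ2 (Function.update r i τhat)) ≤
        g (OPTval σ2 (Function.update r i τi)) := by
  have hsub : {val | ∃ w η, FeasR (Function.update r i τhat) w η ∧
      val = σ2 * ∑ j, (w j) ^ 2 + 2 / η ^ 2} ⊆
      {val | ∃ w η, FeasR (Function.update r i τi) w η ∧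
      val = σ2 * ∑ j, (w j) ^ 2 + 2 / η ^ 2} := by
    rintro v ⟨w, η, ⟨hcon, hsum, hpos, hη⟩, hv⟩
    refine ⟨w, η, ⟨fun j => ?_, hsum, hpos, hη⟩, hv⟩
    rcases eq_or_ne j i with rfl | hne
    · simp only [Function.update_self]
      exact le_trans (by simpa using hcon j) hlt.le
    · have := hcon j
      simpa [Function.update_of_ne hne] using this
  have hbdd : BddBelow {val | ∃ w η, FeasR (Function.update r i τi) w η ∧
      val = σ2 * ∑ j, (w j) ^ 2 + 2 / η ^ 2} := by
    refine ⟨0, ?_⟩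
    rintro v ⟨w, η, ⟨_, _, _, hη⟩, rfl⟩
    have h1 : 0 ≤ σ2 * ∑ j, (w j) ^ 2 :=
      mul_nonneg hσ2.le (Finset.sum_nonneg fun j _ => sq_nonneg _)
    have h2 : 0 ≤ 2 / η ^ 2 := by positivity
    linarith
  obtain ⟨w, η, hf⟩ := hfeas
  have hne : {val | ∃ w η, FeasR (Function.update r i τhat) w η ∧
      val = σ2 * ∑ j, (w j) ^ 2 + 2 / η ^ 2}.Nonempty :=
    ⟨_, w, η, hf, rfl⟩
  have h := csInf_le_csInf hbdd hne hsub
  exact ⟨h, hg h⟩
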